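/- There exists an abelian periodic infinite word that has infinitely many abelian unbordered factors. Concretely, the image of the Thue–Morse word under the morphism τ: 0 ↦ 0110, 1 ↦ 1001 is abelian periodic with period 2 and admits infinitely many abelian unbordered factors. -/

import Mathlib

def factor {α : Type*} (w : ℕ → α) (i n : ℕ) : List α :=
  (List.range n).map (fun k => w (i + k))

def IsFactor {α : Type*} (u : List α) (w : ℕ → α) : Prop :=
  ∃ i, factor w i u.length = u

def AbelianEquiv {α : Type*} [DecidableEq α] (u v : List α) : Prop :=
  ∀ a : α, u.count a = v.count a

def AbelianBordered {α : Type*} [DecidableEq α] (u : List α) : Prop :=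
  ∃ p s : List α, p <+: u ∧ s <:+ u ∧ p ≠ [] ∧ p.length < u.length ∧ AbelianEquiv p s

/-- The Thue–Morse word (`tm n` is the parity of the binary digit sum of `n`). -/
def tm (n : ℕ) : ℕ := (Nat.digits 2 n).sum % 2

/-- The image of the Thue–Morse word under `τ : 0 ↦ 0110, 1 ↦ 1001`. -/
def tauTM (n : ℕ) : ℕ :=
  if n % 4 = 0 ∨ n % 4 = 3 then tm (n / 4) else 1 - tm (n / 4)

/-!
Since `τ` is the square of the Thue–Morse morphism `0 ↦ 01, 1 ↦ 10`, the word `τ(t)` is the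
Thue–Morse word `t` itself. Each aligned block `t(2i) t(2i+1)` is `01` or `10`. For `N = 4 ^ K`
the block `t[N, 2N)` is a palindrome (`j ↦ N - 1 - j` complements the `2K` low binary digits, an
even change of digit sum), and it is preceded by `t(N - 1) = 0` and followed by `t(2N) = 1`.
A word `a P b` with `P` a palindrome and `a ≠ b` is abelian unbordered: its prefix of length
`k + 1` is `a P[0,k)` while its suffix of length `k + 1`, reversed, is `b P[0,k)`, so they contain
different numbers of `a`s.
-/

theorem Nat.digits_sum_add_base_pow_mul {b m j : ℕ} (hb : 1 < b) (hj : j < b ^ m) (c : ℕ) :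
    (Nat.digits b (j + b ^ m * c)).sum = (Nat.digits b j).sum + (Nat.digits b c).sum := by
  rcases Nat.eq_zero_or_pos c with rfl | hc
  · simp
  have hlen : (Nat.digits b j).length ≤ m := (Nat.digits_length_le_iff hb j).2 hj
  rw [← Nat.add_sub_cancel' hlen, ← Nat.digits_append_zeroes_append_digits hb hc]
  simp

theorem Nat.digits_sum_add_digits_sum_base_pow_sub_one_sub {b : ℕ} (hb : 1 < b) (m : ℕ) {j : ℕ}
    (hj : j < b ^ m) : (Nat.digits b j).sum + (Nat.digits b (b ^ m - 1 - j)).sum = m * (b - 1) := by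
  have digits_sum_of_lt : ∀ {x}, x < b → (Nat.digits b x).sum = x := by
    rintro (_ | x) hx
    · simp
    · simp [Nat.digits_of_lt b (x + 1) (by omega) hx]
  induction m generalizing j with
  | zero => simp_all
  | succ m ih =>
    obtain ⟨r, q, hr, hq, rfl⟩ : ∃ r q, r < b ∧ q < b ^ m ∧ j = r + b ^ 1 * q :=
      ⟨j % b, j / b, Nat.mod_lt _ (by omega),
        Nat.div_lt_of_lt_mul (by rwa [← pow_succ']), by rw [pow_one, Nat.mod_add_div]⟩
    obtain ⟨t, ht⟩ : ∃ t, b ^ m = q + 1 + t := ⟨b ^ m - q - 1, by omega⟩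
    have hcompl : b ^ (m + 1) - 1 - (r + b ^ 1 * q) = (b - 1 - r) + b ^ 1 * (b ^ m - 1 - q) := by
      have : b ^ (m + 1) = b * q + b + b * t := by rw [pow_succ', ht]; ring
      rw [this, pow_one, show b ^ m - 1 - q = t by omega]
      omega
    rw [hcompl, Nat.digits_sum_add_base_pow_mul hb (by rw [pow_one]; exact hr),
      Nat.digits_sum_add_base_pow_mul hb (by rw [pow_one]; omega), digits_sum_of_lt hr,
      digits_sum_of_lt (show b - 1 - r < b by omega), add_one_mul, ← ih hq]
    omega

theorem tm_le_one (n : ℕ) : tm n ≤ 1 :=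
  Nat.le_of_lt_succ (Nat.mod_lt _ two_pos)

theorem tm_add_two_pow_mul {m j : ℕ} (hj : j < 2 ^ m) (c : ℕ) :
    tm (j + 2 ^ m * c) = (tm j + tm c) % 2 := by
  rw [tm, tm, tm, Nat.digits_sum_add_base_pow_mul one_lt_two hj, Nat.add_mod]

theorem tm_two_pow_sub_one_sub {m j : ℕ} (hj : j < 2 ^ m) :
    tm (2 ^ m - 1 - j) = (m + tm j) % 2 := by
  have := Nat.digits_sum_add_digits_sum_base_pow_sub_one_sub one_lt_two m hj
  simp only [tm]
  omega

theorem tauTM_eq_tm : tauTM = tm := by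
  funext n
  have hn : n = n % 4 + 2 ^ 2 * (n / 4) := (Nat.mod_add_div n 4).symm
  have hr : n % 4 < 4 := Nat.mod_lt _ (by norm_num)
  have hsmall : tm 0 = 0 ∧ tm 1 = 1 ∧ tm 2 = 1 ∧ tm 3 = 0 := by decide
  have := tm_le_one (n / 4)
  rw [tauTM, hn, tm_add_two_pow_mul hr, ← hn]
  interval_cases n % 4 <;> simp [hsmall] <;> omega

theorem tm_two_mul_add_one (i : ℕ) : tm (2 * i + 1) = 1 - tm (2 * i) := by
  have h0 := tm_add_two_pow_mul (j := 0) (m := 1) (by norm_num) i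
  have h1 := tm_add_two_pow_mul (j := 1) (m := 1) (by norm_num) i
  have hsmall : tm 0 = 0 ∧ tm 1 = 1 := by decide
  have := tm_le_one i
  rw [pow_one, zero_add] at h0
  rw [pow_one, add_comm] at h1
  omega

theorem tm_four_pow_add_sub_one_sub (K : ℕ) {j : ℕ} (hj : j < 4 ^ K) :
    tm (4 ^ K + (4 ^ K - 1 - j)) = tm (4 ^ K + j) := by
  have h4 : (4 : ℕ) ^ K = 2 ^ (2 * K) := by rw [pow_mul]; norm_num
  rw [h4] at hj ⊢
  have hj' : 2 ^ (2 * K) - 1 - j < 2 ^ (2 * K) := by omega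
  have e := tm_add_two_pow_mul hj 1
  have e' := tm_add_two_pow_mul hj' 1
  rw [mul_one, add_comm] at e e'
  rw [e, e', tm_two_pow_sub_one_sub hj]
  omega

theorem tm_four_pow_sub_one (K : ℕ) : tm (4 ^ K - 1) = 0 := by
  have h := tm_two_pow_sub_one_sub (m := 2 * K) (j := 0) (by positivity)
  rw [Nat.sub_zero, pow_mul] at h
  norm_num [tm] at h
  exact h

theorem tm_two_mul_four_pow (K : ℕ) : tm (2 * 4 ^ K) = 1 := by
  have h := tm_add_two_pow_mul (m := 2 * K + 1) (j := 0) (by positivity) 1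
  rw [zero_add, mul_one, pow_succ, pow_mul] at h
  norm_num at h
  simpa [tm, mul_comm] using h

theorem factor_length {α : Type*} (w : ℕ → α) (i n : ℕ) : (factor w i n).length = n := by
  simp [factor]

theorem factor_add_two {α : Type*} (w : ℕ → α) (i n : ℕ) :
    factor w i (n + 2) = w i :: factor w (i + 1) n ++ [w (i + n + 1)] := by
  simp only [factor]
  rw [List.range_succ, List.range_succ_eq_map]
  simp [add_assoc, add_comm 1]

theorem factor_palindrome {α : Type*} {w : ℕ → α} {i n : ℕ}
    (h : ∀ j < n, w (i + (n - 1 - j)) = w (i + j)) : (factor w i n).Palindrome := by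
  refine List.Palindrome.of_reverse_eq (List.ext_getElem (by simp) fun j hj _ => ?_)
  simp only [List.length_reverse, factor_length] at hj
  simp [factor, List.getElem_reverse, h j hj]

theorem take_cons_append_singleton {α : Type*} (x y : α) (l : List α) {k : ℕ}
    (hk : k ≤ l.length) : (x :: l ++ [y]).take (k + 1) = x :: l.take k := by
  simp [List.take_append_of_le_length hk]

theorem abelianEquiv_iff_perm {α : Type*} [DecidableEq α] {u v : List α} :
    AbelianEquiv u v ↔ u.Perm v :=
  List.perm_iff_count.symm

theorem not_abelianBordered_cons_append_of_palindrome {α : Type*} [DecidableEq α] {a b : α}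
    (hab : a ≠ b) {l : List α} (hl : l.Palindrome) : ¬ AbelianBordered (a :: l ++ [b]) := by
  rintro ⟨p, s, hp, hs, hp0, hlt, hps⟩
  obtain ⟨k, hk⟩ : ∃ k, p.length = k + 1 := Nat.exists_eq_succ_of_ne_zero (by simpa using hp0)
  have hkl : k ≤ l.length := by simp at hlt; omega
  have hsk : s.length = k + 1 := by rw [← (abelianEquiv_iff_perm.1 hps).length_eq, hk]
  have hp' : p = a :: l.take k := by
    rw [List.prefix_iff_eq_take.1 hp, hk, take_cons_append_singleton _ _ _ hkl]
  have hs' : s.reverse = b :: l.take k := by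
    have : s.reverse <+: b :: l ++ [a] := by
      simpa [hl.reverse_eq] using List.reverse_prefix.2 hs
    rw [List.prefix_iff_eq_take.1 this, List.length_reverse, hsk,
      take_cons_append_singleton _ _ _ hkl]
  have := hps a
  rw [hp', ← List.count_reverse (l := s), hs'] at this
  simp [hab.symm] at this

theorem not_abelianBordered_factor_tm (K : ℕ) :
    ¬ AbelianBordered (factor tm (4 ^ K - 1) (4 ^ K + 2)) := by
  have hpos : 0 < 4 ^ K := by positivity
  rw [factor_add_two, Nat.sub_add_cancel hpos, show 4 ^ K - 1 + 4 ^ K + 1 = 2 * 4 ^ K by omega,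
    tm_four_pow_sub_one, tm_two_mul_four_pow]
  exact not_abelianBordered_cons_append_of_palindrome zero_ne_one
    (factor_palindrome fun j hj => tm_four_pow_add_sub_one_sub K hj)

theorem abelianEquiv_factor_tm_two_mul (i : ℕ) :
    AbelianEquiv (factor tm (2 * i) 2) (factor tm 0 2) := by
  have h2 : ∀ j, factor tm j 2 = [tm j, tm (j + 1)] := fun j => by simp [factor, List.range_succ]
  have htm : factor tm 0 2 = [0, 1] := by simp [h2, tm]
  rw [abelianEquiv_iff_perm, htm, h2, tm_two_mul_add_one]
  rcases Nat.le_one_iff_eq_zero_or_eq_one.1 (tm_le_one (2 * i)) with h | h <;> rw [h]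
  exact List.Perm.swap 0 1 []

/-- `τ(TM)` is abelian periodic with period 2 yet has infinitely many abelian
unbordered factors. -/
theorem stmt_14 :
    (∀ i, AbelianEquiv (factor tauTM (2 * i) 2) (factor tauTM 0 2)) ∧
    {u : List ℕ | IsFactor u tauTM ∧ ¬ AbelianBordered u}.Infinite := by
  rw [tauTM_eq_tm]
  refine ⟨abelianEquiv_factor_tm_two_mul, ?_⟩
  refine Set.infinite_of_injective_forall_mem (f := fun K => factor tm (4 ^ K - 1) (4 ^ K + 2))
    (fun K L h => ?_) fun K => ⟨⟨4 ^ K - 1, by rw [factor_length]⟩, not_abelianBordered_factor_tm K⟩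
  have := congrArg List.length h
  simp only [factor_length, add_left_inj] at this
  exact Nat.pow_right_injective le_rfl (by simpa using this)
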